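/- For any nontrivial graphs G and H, edim(G ∨ H) ≥ |V(G)| + |V(H)| - 2, where G ∨ H denotes the join of G and H. -/

import Mathlib

open SimpleGraph

variable {V W : Type*}

/-- Distance (in `ℕ∞`) from a vertex to an edge: the minimum of the distances
to the two endpoints. -/
noncomputable def edgeDist (G : SimpleGraph V) (v : V) (e : Sym2 V) : ℕ∞ :=
  Sym2.lift ⟨fun a b => min (G.edist v a) (G.edist v b),
    fun a b => min_comm _ _⟩ e

/-- A set of vertices is an edge metric generator if every pair of distinct
edges is distinguished by some vertex of the set. -/
def IsEdgeMetricGenerator (G : SimpleGraph V) (S : Set V) : Prop :=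
  ∀ e₁ ∈ G.edgeSet, ∀ e₂ ∈ G.edgeSet, e₁ ≠ e₂ →
    ∃ w ∈ S, edgeDist G w e₁ ≠ edgeDist G w e₂

/-- The edge metric dimension: minimum cardinality of an edge metric generator. -/
noncomputable def edim (G : SimpleGraph V) : ℕ :=
  sInf {n | ∃ S : Set V, S.ncard = n ∧ IsEdgeMetricGenerator G S}


/-- The join of two graphs: disjoint union plus all edges across. -/
def joinGraph (G : SimpleGraph V) (H : SimpleGraph W) : SimpleGraph (V ⊕ W) where
  Adj x y := match x, y with
    | .inl a, .inl b => G.Adj a b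
    | .inr a, .inr b => H.Adj a b
    | .inl _, .inr _ => True
    | .inr _, .inl _ => True
  symm := by constructor; rintro (a | a) (b | b) h <;> simp_all [SimpleGraph.adj_comm]
  loopless := by
    constructor; rintro (a | a) h
    · exact G.loopless.irrefl a h
    · exact H.loopless.irrefl a h

/-- A total dominating set: every vertex has a neighbor in the set. -/
def IsTotalDomSet (G : SimpleGraph V) (D : Set V) : Prop :=
  ∀ v : V, ∃ d ∈ D, G.Adj v d

/-- The total domination number. -/
noncomputable def totalDomNum (G : SimpleGraph V) : ℕ :=
  sInf {n | ∃ D : Set V, D.ncard = n ∧ IsTotalDomSet G D}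

/-- The class 𝒢: for every vertex `u` there is a neighbor `v`
such that `{u, v}` is a minimum total dominating set. -/
def InClassG (G : SimpleGraph V) : Prop :=
  ∀ u : V, ∃ v : V, G.Adj u v ∧ IsTotalDomSet G {u, v} ∧
    ({u, v} : Set V).ncard = totalDomNum G

/-- Lexicographic product `G[H]`. -/
def lexProd (G : SimpleGraph V) (H : SimpleGraph W) : SimpleGraph (V × W) where
  Adj x y := G.Adj x.1 y.1 ∨ (x.1 = y.1 ∧ H.Adj x.2 y.2)
  symm := by constructor; rintro ⟨g, h⟩ ⟨g', h'⟩ (hadj | ⟨rfl, hadj⟩)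
             · exact Or.inl hadj.symm
             · exact Or.inr ⟨rfl, hadj.symm⟩
  loopless := by constructor; rintro ⟨g, h⟩ (hadj | ⟨-, hadj⟩)
                 · exact G.loopless.irrefl g hadj
                 · exact H.loopless.irrefl h hadj

/-- Corona product `G ⊙ H`: vertex `(g, none)` is the vertex `g` of `G`, and
`(g, some h)` is the vertex `h` of the copy of `H` attached to `g`. -/
def corona (G : SimpleGraph V) (H : SimpleGraph W) : SimpleGraph (V × Option W) where
  Adj x y := match x, y with
    | (g, none), (g', none) => G.Adj g g'
    | (g, none), (g', some _) => g = g'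
    | (g, some _), (g', none) => g = g'
    | (g, some h), (g', some h') => g = g' ∧ H.Adj h h'
  symm := by constructor; rintro ⟨g, (_ | h)⟩ ⟨g', (_ | h')⟩ hadj <;>
             simp_all [SimpleGraph.adj_comm, eq_comm]
  loopless := by constructor; rintro ⟨g, (_ | h)⟩ hadj <;> simp_all

/-- The closed neighborhood of a vertex. -/
def closedNbhd (G : SimpleGraph V) (u : V) : Set V :=
  insert u (G.neighborSet u)

/-- `u` and `v` are false twins: equal open neighborhoods. -/
def FalseTwin (G : SimpleGraph V) (u v : V) : Prop :=
  G.neighborSet u = G.neighborSet v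

/-- `u` and `v` are true twins: equal closed neighborhoods. -/
def TrueTwin (G : SimpleGraph V) (u v : V) : Prop :=
  closedNbhd G u = closedNbhd G v

/-- The union of the closed neighborhoods of the two endpoints of an edge. -/
def edgeNbhd (G : SimpleGraph V) : Sym2 V → Set V :=
  Sym2.lift ⟨fun a b => closedNbhd G a ∪ closedNbhd G b, fun _ _ => Set.union_comm _ _⟩

/-- Two edges are twin edges: `N[u] ∪ N[v] = N[x] ∪ N[y]`. -/
def TwinEdges (G : SimpleGraph V) (e f : Sym2 V) : Prop :=
  edgeNbhd G e = edgeNbhd G f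

/-- The set of edges lying in nontrivial edge-twin classes. -/
def nontrivTwinEdges (G : SimpleGraph V) : Set (Sym2 V) :=
  {e ∈ G.edgeSet | ∃ f ∈ G.edgeSet, f ≠ e ∧ TwinEdges G e f}

/-- `q(G)`: the number of edges lying in nontrivial edge-twin classes. -/
noncomputable def qval (G : SimpleGraph V) : ℕ := (nontrivTwinEdges G).ncard

/-- `q'(G) = q(G) - m`, where `m` is the number of nontrivial edge-twin classes. -/
noncomputable def q'val (G : SimpleGraph V) : ℕ :=
  qval G - (edgeNbhd G '' nontrivTwinEdges G).ncard

/-- The set of vertices lying in nontrivial false-twin classes. -/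
def nontrivFalseTwins (G : SimpleGraph V) : Set V :=
  {v | ∃ u, u ≠ v ∧ FalseTwin G u v}

/-- The set of vertices lying in nontrivial true-twin classes. -/
def nontrivTrueTwins (G : SimpleGraph V) : Set V :=
  {v | ∃ u, u ≠ v ∧ TrueTwin G u v}

/-- `f'(G) = f(G) - k`: vertices in nontrivial false-twin classes minus the
number of such classes. -/
noncomputable def f'val (G : SimpleGraph V) : ℕ :=
  (nontrivFalseTwins G).ncard - (G.neighborSet '' nontrivFalseTwins G).ncard

/-- `t'(G) = t(G) - ℓ`: vertices in nontrivial true-twin classes minus the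
number of such classes. -/
noncomputable def t'val (G : SimpleGraph V) : ℕ :=
  (nontrivTrueTwins G).ncard - (closedNbhd G '' nontrivTrueTwins G).ncard

/-- A set of representatives for the twin deletion operation: it contains
exactly one vertex from each (false- or true-) twin equivalence class. -/
def IsTwinDeletionSet (G : SimpleGraph V) (R : Set V) : Prop :=
  ∀ v : V, ∃! r : V, r ∈ R ∧ (FalseTwin G v r ∨ TrueTwin G v r)

/-! Two cross edges `a w` and `b w` of `G ∨ H` with `a, b ∈ V` are at distance `0` from `w` and
at distance `1` from every vertex other than `a`, `b`, `w`, so only `a` or `b` can resolve them.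
Hence an edge metric generator omits at most one vertex of each side. -/

open Sum

lemma edgeDist_eq_zero_iff {G : SimpleGraph V} {v : V} {e : Sym2 V} :
    edgeDist G v e = 0 ↔ v ∈ e := by
  induction e using Sym2.ind with
  | _ a b =>
    change min (G.edist v a) (G.edist v b) = 0 ↔ _
    rw [min_eq_zero, SimpleGraph.edist_eq_zero_iff, SimpleGraph.edist_eq_zero_iff, Sym2.mem_iff]

lemma edgeDist_eq_one_of_adj {G : SimpleGraph V} {v a : V} {e : Sym2 V}
    (hv : v ∉ e) (ha : a ∈ e) (hadj : G.Adj v a) : edgeDist G v e = 1 := by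
  have hle : edgeDist G v e ≤ 1 := by
    induction e using Sym2.ind with
    | _ b c =>
      rw [← SimpleGraph.edist_eq_one_iff_adj.mpr hadj]
      rcases Sym2.mem_iff.mp ha with rfl | rfl
      exacts [min_le_left _ _, min_le_right _ _]
  have hne : edgeDist G v e ≠ 0 := mt edgeDist_eq_zero_iff.mp hv
  exact le_antisymm hle (Order.one_le_iff_ne_zero.mpr hne)

lemma isEdgeMetricGenerator_univ (G : SimpleGraph V) : IsEdgeMetricGenerator G Set.univ := by
  intro e₁ _ e₂ _ hne
  obtain ⟨v, hv⟩ : ∃ v, ¬(v ∈ e₁ ↔ v ∈ e₂) := by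
    by_contra! h
    exact hne (Sym2.ext h)
  refine ⟨v, trivial, fun h => hv ?_⟩
  rw [← edgeDist_eq_zero_iff, h, edgeDist_eq_zero_iff]

lemma exists_isEdgeMetricGenerator_ncard_eq_edim (G : SimpleGraph V) :
    ∃ S : Set V, S.ncard = edim G ∧ IsEdgeMetricGenerator G S :=
  Nat.sInf_mem (s := {n | ∃ S : Set V, S.ncard = n ∧ IsEdgeMetricGenerator G S})
    ⟨_, Set.univ, rfl, isEdgeMetricGenerator_univ G⟩

lemma IsEdgeMetricGenerator.mem_or_mem {G : SimpleGraph V} {S : Set V}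
    (hS : IsEdgeMetricGenerator G S) {e₁ e₂ : Sym2 V} (h₁ : e₁ ∈ G.edgeSet)
    (h₂ : e₂ ∈ G.edgeSet) (hne : e₁ ≠ e₂) {a b : V}
    (hab : ∀ x, x ≠ a → x ≠ b → edgeDist G x e₁ = edgeDist G x e₂) : a ∈ S ∨ b ∈ S := by
  obtain ⟨x, hxS, hx⟩ := hS e₁ h₁ e₂ h₂ hne
  by_contra! h
  exact hx (hab x (by rintro rfl; exact h.1 hxS) (by rintro rfl; exact h.2 hxS))

lemma edgeDist_joinGraph_inl_inr {G : SimpleGraph V} {H : SimpleGraph W} {x : V ⊕ W}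
    {a : V} {b : W} (ha : x ≠ inl a) (hb : x ≠ inr b) :
    edgeDist (joinGraph G H) x s(inl a, inr b) = 1 := by
  have hx : x ∉ s(inl a, inr b) := by simp [ha, hb]
  cases x with
  | inl v => exact edgeDist_eq_one_of_adj hx (Sym2.mem_mk_right _ _) trivial
  | inr w => exact edgeDist_eq_one_of_adj hx (Sym2.mem_mk_left _ _) trivial

lemma IsEdgeMetricGenerator.compl_preimage_inl_subsingleton [Nonempty W]
    {G : SimpleGraph V} {H : SimpleGraph W} {S : Set (V ⊕ W)}
    (hS : IsEdgeMetricGenerator (joinGraph G H) S) : (inl ⁻¹' S)ᶜ.Subsingleton := by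
  intro a ha b hb
  by_contra hab
  obtain ⟨w⟩ := ‹Nonempty W›
  refine (hS.mem_or_mem (e₁ := s(inl a, inr w)) (e₂ := s(inl b, inr w)) trivial trivial
    (by simp [hab]) fun x hxa hxb => ?_).elim ha hb
  obtain rfl | hxw := eq_or_ne x (inr w)
  · rw [edgeDist_eq_zero_iff.mpr (Sym2.mem_mk_right _ _),
      edgeDist_eq_zero_iff.mpr (Sym2.mem_mk_right _ _)]
  · rw [edgeDist_joinGraph_inl_inr hxa hxw, edgeDist_joinGraph_inl_inr hxb hxw]

lemma IsEdgeMetricGenerator.compl_preimage_inr_subsingleton [Nonempty V]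
    {G : SimpleGraph V} {H : SimpleGraph W} {S : Set (V ⊕ W)}
    (hS : IsEdgeMetricGenerator (joinGraph G H) S) : (inr ⁻¹' S)ᶜ.Subsingleton := by
  intro a ha b hb
  by_contra hab
  obtain ⟨v⟩ := ‹Nonempty V›
  refine (hS.mem_or_mem (e₁ := s(inl v, inr a)) (e₂ := s(inl v, inr b)) trivial trivial
    (by simp [hab]) fun x hxa hxb => ?_).elim ha hb
  obtain rfl | hxv := eq_or_ne x (inl v)
  · rw [edgeDist_eq_zero_iff.mpr (Sym2.mem_mk_left _ _),
      edgeDist_eq_zero_iff.mpr (Sym2.mem_mk_left _ _)]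
  · rw [edgeDist_joinGraph_inl_inr hxv hxa, edgeDist_joinGraph_inl_inr hxv hxb]

lemma Set.card_le_ncard_add_one_of_compl_subsingleton {α : Type*} [Finite α] {T : Set α}
    (hT : Tᶜ.Subsingleton) : Nat.card α ≤ T.ncard + 1 := by
  rw [← Set.ncard_add_ncard_compl T]
  have := Set.ncard_le_one_iff_subsingleton.mpr hT
  omega

lemma Set.ncard_eq_ncard_preimage_inl_add_ncard_preimage_inr [Finite V] [Finite W]
    (S : Set (V ⊕ W)) : S.ncard = (inl ⁻¹' S).ncard + (inr ⁻¹' S).ncard := by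
  conv_lhs => rw [← Set.image_preimage_inl_union_image_preimage_inr S]
  rw [Set.ncard_union_eq Set.disjoint_image_inl_image_inr,
    Set.ncard_image_of_injective _ inl_injective, Set.ncard_image_of_injective _ inr_injective]

theorem edim_join_lower_bound {V W : Type*} [Fintype V] [Fintype W]
    (G : SimpleGraph V) (H : SimpleGraph W)
    (hG : 2 ≤ Fintype.card V) (hH : 2 ≤ Fintype.card W) :
    Fintype.card V + Fintype.card W - 2 ≤ edim (joinGraph G H) := by
  have : Nonempty V := Fintype.card_pos_iff.mp (by omega)
  have : Nonempty W := Fintype.card_pos_iff.mp (by omega)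
  obtain ⟨S, hcard, hS⟩ := exists_isEdgeMetricGenerator_ncard_eq_edim (joinGraph G H)
  have hV := Set.card_le_ncard_add_one_of_compl_subsingleton hS.compl_preimage_inl_subsingleton
  have hW := Set.card_le_ncard_add_one_of_compl_subsingleton hS.compl_preimage_inr_subsingleton
  rw [Nat.card_eq_fintype_card] at hV hW
  rw [← hcard, Set.ncard_eq_ncard_preimage_inl_add_ncard_preimage_inr]
  omega
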